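/- (Polygon representation of the two-edge correlation.) Let a,b,c > 0, set A = (a−b−c)/(a+b+c), B = (b−a−c)/(a+b+c), C = (c−a−b)/(a+b+c), assume ABC ≠ 0, and let ε_a, ε_b, ε_c ∈ ℂ satisfy ε_b ε_c = A, ε_a ε_c = B, ε_a ε_b = C. Then for any two distinct midpoints e, f ∈ M_n, the polygon partition function satisfies Σ_{π ∈ Π̂_n} W(π) ≠ 0 and the two-edge correlation of the 1-2 model satisfies E_{μ_n}[σ(e)σ(f)] = ( Σ_{π ∈ Π^{e,f}_n} W(π) ) / ( Σ_{π ∈ Π̂_n} W(π) ). -/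

import Mathlib

open MeasureTheory Filter Topology

/-- The three edge types of the hexagonal lattice: `a` (horizontal),
`b` (NW/SE), `c` (NE/SW). -/
inductive EType : Type
  | a : EType
  | b : EType
  | c : EType
deriving DecidableEq

instance : Fintype EType :=
  ⟨{EType.a, EType.b, EType.c}, fun x => by cases x <;> simp⟩

/-- A vertex of the (toroidal or infinite) hexagonal lattice with coordinates in `α`. -/
abbrev HexVtx (α : Type) : Type := (α × α) × Bool

/-- An edge of the hexagonal lattice: its type together with coordinates in `α`. -/
abbrev HexEdge (α : Type) : Type := EType × α × α

/-- The `s`-type edge incident to the vertex `v`. -/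
def edgeAt {α : Type} [Sub α] [One α] (v : HexVtx α) : EType → HexEdge α
  | .a => (.a, v.1)
  | .b => if v.2 then (.b, v.1) else (.b, (v.1.1, v.1.2 - 1))
  | .c => if v.2 then (.c, v.1) else (.c, (v.1.1 - 1, v.1.2))

/-- The two endpoints of an edge. -/
def ends {α : Type} [Add α] [One α] : HexEdge α → HexVtx α × HexVtx α
  | (.a, x, y) => (((x, y), false), ((x, y), true))
  | (.b, x, y) => (((x, y), true), ((x, y + 1), false))
  | (.c, x, y) => (((x, y), true), ((x + 1, y), false))

/-- The 1-2 model vertex weight of a triple of incident edge spins. -/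
def vWt (a b c : ℝ) (sa sb sc : Bool) : ℝ :=
  if sb = sc ∧ sa ≠ sb then a
  else if sa = sc ∧ sb ≠ sa then b
  else if sa = sb ∧ sc ≠ sa then c
  else 0

/-- Vertices of the toroidal lattice `H_n`. -/
abbrev VF (n : ℕ) : Type := HexVtx (ZMod n)

/-- Edges of the toroidal lattice `H_n`. -/
abbrev EF (n : ℕ) : Type := HexEdge (ZMod n)

/-- Spin configurations on the edges of `H_n`; `true` means spin `+1`. -/
abbrev ConfF (n : ℕ) : Type := EF n → Bool

/-- The 1-2 model weight of a configuration on `H_n`. -/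
def confWt (n : ℕ) [NeZero n] (a b c : ℝ) (σ : ConfF n) : ℝ :=
  ∏ v : VF n, vWt a b c (σ (edgeAt v .a)) (σ (edgeAt v .b)) (σ (edgeAt v .c))

/-- The 1-2 model partition function on `H_n`. -/
noncomputable def Zn (n : ℕ) [NeZero n] (a b c : ℝ) : ℝ :=
  ∑ σ : ConfF n, confWt n a b c σ

/-- Vertices of the infinite hexagonal lattice `H`. -/
abbrev VI : Type := HexVtx ℤ

/-- Edges of the infinite hexagonal lattice `H`. -/
abbrev EI : Type := HexEdge ℤ

/-- Configurations on the infinite lattice: the space `Ω = {−1,+1}^𝔼`. -/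
abbrev Config : Type := EI → Bool

/-- Periodic lift of a configuration on `H_n` to the infinite lattice. -/
def liftConf (n : ℕ) (σ : ConfF n) : Config :=
  fun e => σ (e.1, ((e.2.1 : ZMod n), (e.2.2 : ZMod n)))

/-- The pushforward `μ̂_n` on `Ω` of the 1-2 model measure `μ_n` on `H_n`. -/
noncomputable def muHat (n : ℕ) [NeZero n] (a b c : ℝ) : Measure Config :=
  ∑ σ : ConfF n, ENNReal.ofReal (confWt n a b c σ / Zn n a b c) •
    Measure.dirac (liftConf n σ)

/-- `μ` is the weak limit of the sequence `μ̂_n` (tested against all bounded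
continuous functions). -/
def IsWeakLimit (a b c : ℝ) (μ : Measure Config) : Prop :=
  IsProbabilityMeasure μ ∧
    ∀ f : BoundedContinuousFunction Config ℝ,
      Tendsto (fun n : ℕ => ∫ ω, f ω ∂ muHat (n + 1) a b c) atTop (𝓝 (∫ ω, f ω ∂ μ))

/-- The spin value (`±1`) of a Boolean state, as a complex number. -/
def cspin (s : Bool) : ℂ := if s then 1 else -1

/-- The spin-vector weight `w(σ^v, σ^e)` of a pair of vertex and midpoint spin
configurations on `H_n`, with half-edge constants `ε_a, ε_b, ε_c ∈ ℂ`. -/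
noncomputable def spinWt (n : ℕ) [NeZero n] (ε : EType → ℂ)
    (σv : VF n → Bool) (σe : ConfF n) : ℂ :=
  ∏ v : VF n, ∏ s : EType, (1 + ε s * cspin (σv v) * cspin (σe (edgeAt v s)))

/-- The two-edge correlation `E_{μ_n}[σ(e)σ(f)]` of the 1-2 model on `H_n`. -/
noncomputable def corrFin (n : ℕ) [NeZero n] (a b c : ℝ) (e f : EF n) : ℝ :=
  (∑ σ : ConfF n,
      (if σ e then (1 : ℝ) else -1) * (if σ f then (1 : ℝ) else -1) *
        confWt n a b c σ) / Zn n a b c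

/-- A half-edge of the half-edge graph `AH_n`: an edge `g` of `H_n` together
with a Boolean selecting one of its two endpoints; it joins the midpoint of `g`
to that endpoint. -/
abbrev HalfEdge (n : ℕ) : Type := EF n × Bool

/-- The vertex (of `V_n`) at the end of a half-edge. -/
def halfEnd (n : ℕ) (h : HalfEdge n) : VF n :=
  if h.2 then (ends h.1).2 else (ends h.1).1

/-- The weight `W(π) = ε_a^{|π(a)|} ε_b^{|π(b)|} ε_c^{|π(c)|}` of a set of
half-edges. -/
noncomputable def polyWt (n : ℕ) (ε : EType → ℂ) (π : Finset (HalfEdge n)) : ℂ :=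
  ∏ h ∈ π, ε h.1.1

/-- `π ∈ Π̂_n`: every vertex and every midpoint of `AH_n` meets an even number
of half-edges of `π`. -/
def IsPolygonConf (n : ℕ) [NeZero n] (π : Finset (HalfEdge n)) : Prop :=
  (∀ v : VF n, Even (π.filter (fun h => halfEnd n h = v)).card) ∧
    ∀ g : EF n, Even (π.filter (fun h => h.1 = g)).card

/-- `π ∈ Π^{e,f}_n`: every vertex of `AH_n` other than the midpoints `e`, `f`
meets an even number of half-edges of `π`, while `e` and `f` each meet exactly
one. -/
def IsPathConf (n : ℕ) [NeZero n] (e f : EF n) (π : Finset (HalfEdge n)) : Prop :=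
  (∀ v : VF n, Even (π.filter (fun h => halfEnd n h = v)).card) ∧
    (∀ g : EF n, g ≠ e → g ≠ f → Even (π.filter (fun h => h.1 = g)).card) ∧
    (π.filter (fun h => h.1 = e)).card = 1 ∧
    (π.filter (fun h => h.1 = f)).card = 1

open scoped Classical in
/-- The polygon partition function `Σ_{π ∈ Π̂_n} W(π)`. -/
noncomputable def polygonSum (n : ℕ) [NeZero n] (ε : EType → ℂ) : ℂ :=
  ∑ π : Finset (HalfEdge n), if IsPolygonConf n π then polyWt n ε π else 0

open scoped Classical in
/-- The sum `Σ_{π ∈ Π^{e,f}_n} W(π)`. -/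
noncomputable def pathSum (n : ℕ) [NeZero n] (ε : EType → ℂ) (e f : EF n) : ℂ :=
  ∑ π : Finset (HalfEdge n), if IsPathConf n e f π then polyWt n ε π else 0


/-!
Put a spin `t_v = ±1` on every vertex and `σ_g = ±1` on every midpoint of `AH_n`, with weight
`∏ (1 + ε_s t_v σ_g)` over the half-edges `⟨v, m_g⟩`. Summing out `t_v` at a single vertex
gives `2 (1 + ε_aε_b σ_aσ_b + ε_aε_c σ_aσ_c + ε_bε_c σ_bσ_c) = 8 w(σ|_v) / (a + b + c)`, so
summing out all vertex spins yields a constant multiple of the 1-2 model weight. Expanding the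
product over half-edges instead, the sum over all spins kills every set of half-edges with an
odd vertex or midpoint and leaves `2^{|V_n|+|E_n|} Σ_{π ∈ Π̂_n} W(π)`; inserting `σ_e σ_f`
flips the parity at `e` and `f` and gives the sum over `Π^{e,f}_n` instead. The two expansions
carry the same nonzero constant, which cancels in the ratio.
-/

open Finset

section HighTemperatureExpansion

variable {X : Type*} [Fintype X] [DecidableEq X]

lemma sum_cspin_pow (d : ℕ) : ∑ t : Bool, cspin t ^ d = if Even d then 2 else 0 := by
  rcases Nat.even_or_odd d with hd | hd
  · simp [cspin, hd, hd.neg_one_pow]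
  · simp [cspin, Nat.not_even_iff_odd.mpr hd, hd.neg_one_pow]

lemma sum_prod_cspin_pow (k : X → ℕ) :
    ∑ σ : X → Bool, ∏ x, cspin (σ x) ^ k x =
      if ∀ x, Even (k x) then 2 ^ Fintype.card X else 0 := by
  rw [← Fintype.prod_sum fun x t => cspin t ^ k x]
  simp only [sum_cspin_pow, Fintype.prod_ite_zero, prod_const, card_univ]

lemma prod_cspin_comp {ι : Type*} (s : Finset ι) (g : ι → X) (σ : X → Bool) :
    ∏ i ∈ s, cspin (σ (g i)) = ∏ x, cspin (σ x) ^ #{i ∈ s | g i = x} := by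
  rw [← prod_fiberwise_of_maps_to fun i _ => mem_univ (g i)]
  refine prod_congr rfl fun x _ => ?_
  rw [prod_congr rfl fun i hi => by rw [(mem_filter.mp hi).2], prod_const]

lemma prod_cspin_eq_prod_pow (D : Finset X) (σ : X → Bool) :
    ∏ x ∈ D, cspin (σ x) = ∏ x, cspin (σ x) ^ (if x ∈ D then 1 else 0) := by
  simp only [pow_ite, pow_one, pow_zero, Fintype.prod_ite_mem]

variable {V E H : Type*} [Fintype V] [DecidableEq V] [Fintype E] [DecidableEq E] [Fintype H]

theorem sum_sum_prod_one_add_eq_sum_even (vtx : H → V) (mid : H → E) (w : H → ℂ)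
    (D : Finset E) :
    ∑ σe : E → Bool, ∑ σv : V → Bool,
        (∏ g ∈ D, cspin (σe g)) *
          ∏ h, (1 + w h * cspin (σv (vtx h)) * cspin (σe (mid h))) =
      2 ^ (Fintype.card V + Fintype.card E) * ∑ π : Finset H,
        if (∀ v, Even #{h ∈ π | vtx h = v}) ∧
            ∀ g, Even ((if g ∈ D then 1 else 0) + #{h ∈ π | mid h = g})
        then ∏ h ∈ π, w h else 0 := by
  have sum_vtx (π : Finset H) :
      ∑ σv : V → Bool, ∏ h ∈ π, cspin (σv (vtx h)) =
        if ∀ v, Even #{h ∈ π | vtx h = v} then 2 ^ Fintype.card V else 0 := by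
    simp only [prod_cspin_comp, sum_prod_cspin_pow]
  have sum_mid (π : Finset H) :
      ∑ σe : E → Bool, (∏ g ∈ D, cspin (σe g)) * ∏ h ∈ π, cspin (σe (mid h)) =
        if ∀ g, Even ((if g ∈ D then 1 else 0) + #{h ∈ π | mid h = g})
        then 2 ^ Fintype.card E else 0 := by
    simp only [prod_cspin_eq_prod_pow, prod_cspin_comp, ← prod_mul_distrib, ← pow_add,
      sum_prod_cspin_pow]
  calc _ = ∑ π : Finset H, (∏ h ∈ π, w h) *
        ((∑ σv : V → Bool, ∏ h ∈ π, cspin (σv (vtx h))) *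
          ∑ σe : E → Bool, (∏ g ∈ D, cspin (σe g)) *
            ∏ h ∈ π, cspin (σe (mid h))) := by
        simp only [prod_one_add, powerset_univ, prod_mul_distrib, mul_sum, sum_mul]
        refine (sum_congr rfl fun σe _ => sum_comm).trans (sum_comm.trans ?_)
        refine sum_congr rfl fun π _ => sum_congr rfl fun σe _ => sum_congr rfl fun σv _ => ?_
        ring
    _ = _ := by
        rw [mul_sum]
        refine sum_congr rfl fun π _ => ?_
        rw [sum_vtx, sum_mid, ite_zero_mul_ite_zero, mul_ite_zero, mul_ite_zero, pow_add]
        congr 1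
        ring

end HighTemperatureExpansion

section OneTwoModel

lemma prod_etype {M : Type*} [CommMonoid M] (f : EType → M) :
    ∏ s, f s = f .a * f .b * f .c := by
  rw [show (univ : Finset EType) = {.a, .b, .c} from rfl, prod_insert (by decide),
    prod_pair (by decide), mul_assoc]

lemma sum_bool_prod_one_add (ε : EType → ℂ) (x : EType → Bool) :
    ∑ t : Bool, ∏ s, (1 + ε s * cspin t * cspin (x s)) =
      2 * (1 + ε .a * ε .b * (cspin (x .a) * cspin (x .b)) +
        ε .a * ε .c * (cspin (x .a) * cspin (x .c)) +
        ε .b * ε .c * (cspin (x .b) * cspin (x .c))) := by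
  simp only [Fintype.sum_bool, prod_etype, cspin, ↓reduceIte, Bool.false_eq_true]
  ring

lemma sum_bool_prod_one_add_eq_vWt {a b c : ℝ} (habc : a + b + c ≠ 0) {ε : EType → ℂ}
    (hbc : ε .b * ε .c = ((a - b - c) / (a + b + c) : ℝ))
    (hac : ε .a * ε .c = ((b - a - c) / (a + b + c) : ℝ))
    (hab : ε .a * ε .b = ((c - a - b) / (a + b + c) : ℝ)) (x : EType → Bool) :
    ∑ t : Bool, ∏ s, (1 + ε s * cspin t * cspin (x s)) =
      ((8 / (a + b + c) * vWt a b c (x .a) (x .b) (x .c) : ℝ) : ℂ) := by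
  rw [sum_bool_prod_one_add, hab, hac, hbc]
  have habc' : (a : ℂ) + b + c ≠ 0 := by exact_mod_cast habc
  push_cast
  field_simp
  cases x .a <;> cases x .b <;> cases x .c <;>
    simp only [cspin, vWt, ↓reduceIte, Bool.false_eq_true, Bool.true_eq_false, ne_eq,
      not_true_eq_false, not_false_eq_true, and_self, and_true, and_false,
      Complex.ofReal_zero] <;> ring

lemma sum_spinWt {a b c : ℝ} (habc : a + b + c ≠ 0) {ε : EType → ℂ}
    (hbc : ε .b * ε .c = ((a - b - c) / (a + b + c) : ℝ))
    (hac : ε .a * ε .c = ((b - a - c) / (a + b + c) : ℝ))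
    (hab : ε .a * ε .b = ((c - a - b) / (a + b + c) : ℝ)) (n : ℕ) [NeZero n] (σe : ConfF n) :
    ∑ σv : VF n → Bool, spinWt n ε σv σe =
      (((8 / (a + b + c)) ^ Fintype.card (VF n) * confWt n a b c σe : ℝ) : ℂ) := by
  simp only [spinWt]
  rw [← Fintype.prod_sum fun v t => ∏ s, (1 + ε s * cspin t * cspin (σe (edgeAt v s))),
    prod_congr rfl fun v _ => sum_bool_prod_one_add_eq_vWt habc hbc hac hab _]
  push_cast [confWt, prod_mul_distrib, prod_const, card_univ]
  rfl

-- `ends` lists an `a`-edge from its `false` end but `b`- and `c`-edges from their `true` end.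
def halfEdgeEquiv (n : ℕ) : VF n × EType ≃ HalfEdge n where
  toFun p := (edgeAt p.1 p.2, if p.2 = .a then p.1.2 else !p.1.2)
  invFun h := (halfEnd n h, h.1.1)
  left_inv := by
    rintro ⟨⟨⟨x, y⟩, u⟩, s⟩
    cases s <;> cases u <;> simp [edgeAt, halfEnd, ends]
  right_inv := by
    rintro ⟨⟨s, x, y⟩, u⟩
    cases s <;> cases u <;> simp [edgeAt, halfEnd, ends]

lemma edgeAt_halfEnd (n : ℕ) (h : HalfEdge n) : edgeAt (halfEnd n h) h.1.1 = h.1 :=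
  congrArg Prod.fst ((halfEdgeEquiv n).apply_symm_apply h)

lemma spinWt_eq_prod_halfEdge (n : ℕ) [NeZero n] (ε : EType → ℂ) (σv : VF n → Bool)
    (σe : ConfF n) :
    spinWt n ε σv σe =
      ∏ h : HalfEdge n, (1 + ε h.1.1 * cspin (σv (halfEnd n h)) * cspin (σe h.1)) := by
  rw [spinWt, ← Fintype.prod_prod_type',
    ← (halfEdgeEquiv n).symm.prod_comp
      fun p => 1 + ε p.2 * cspin (σv p.1) * cspin (σe (edgeAt p.1 p.2))]
  simp only [halfEdgeEquiv, Equiv.coe_fn_symm_mk, edgeAt_halfEnd]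

end OneTwoModel

lemma card_filter_fst_eq_le_card {α β : Type*} [DecidableEq α] [Fintype β]
    (s : Finset (α × β)) (a : α) : #{p ∈ s | p.1 = a} ≤ Fintype.card β :=
  calc #{p ∈ s | p.1 = a} ≤ #({a} ×ˢ univ : Finset (α × β)) :=
        card_le_card fun p hp => mem_product.mpr
          ⟨mem_singleton.mpr (mem_filter.mp hp).2, mem_univ _⟩
    _ = Fintype.card β := by simp

section PolygonRepresentation

variable (n : ℕ) [NeZero n]

def HasBoundary (D : Finset (EF n)) (π : Finset (HalfEdge n)) : Prop :=
  (∀ v : VF n, Even #{h ∈ π | halfEnd n h = v}) ∧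
    ∀ g : EF n, Even ((if g ∈ D then 1 else 0) + #{h ∈ π | h.1 = g})

instance (D : Finset (EF n)) : DecidablePred (HasBoundary n D) :=
  fun _ => inferInstanceAs (Decidable (_ ∧ _))

theorem sum_sum_prod_cspin_mul_spinWt (ε : EType → ℂ) (D : Finset (EF n)) :
    ∑ σe : ConfF n, ∑ σv : VF n → Bool, (∏ g ∈ D, cspin (σe g)) * spinWt n ε σv σe =
      2 ^ (Fintype.card (VF n) + Fintype.card (EF n)) *
        ∑ π : Finset (HalfEdge n), if HasBoundary n D π then polyWt n ε π else 0 := by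
  simp only [spinWt_eq_prod_halfEdge]
  exact sum_sum_prod_one_add_eq_sum_even (halfEnd n) Prod.fst (fun h => ε h.1.1) D

theorem sum_polyWt_hasBoundary {a b c : ℝ} (habc : a + b + c ≠ 0) {ε : EType → ℂ}
    (hbc : ε .b * ε .c = ((a - b - c) / (a + b + c) : ℝ))
    (hac : ε .a * ε .c = ((b - a - c) / (a + b + c) : ℝ))
    (hab : ε .a * ε .b = ((c - a - b) / (a + b + c) : ℝ)) (D : Finset (EF n)) :
    ∑ π : Finset (HalfEdge n), (if HasBoundary n D π then polyWt n ε π else 0) =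
      (8 / (a + b + c)) ^ Fintype.card (VF n) / 2 ^ (Fintype.card (VF n) + Fintype.card (EF n)) *
        ∑ σ : ConfF n, (∏ g ∈ D, cspin (σ g)) * confWt n a b c σ := by
  have expansion := sum_sum_prod_cspin_mul_spinWt n ε D
  simp only [← mul_sum, sum_spinWt habc hbc hac hab] at expansion
  rw [div_mul_eq_mul_div, eq_div_iff (pow_ne_zero _ two_ne_zero), mul_comm, ← expansion, mul_sum]
  refine sum_congr rfl fun σ _ => ?_
  push_cast
  ring

variable {n}

lemma hasBoundary_empty_iff (π : Finset (HalfEdge n)) :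
    HasBoundary n ∅ π ↔ IsPolygonConf n π := by
  simp [HasBoundary, IsPolygonConf]

lemma hasBoundary_pair_iff (e f : EF n) (π : Finset (HalfEdge n)) :
    HasBoundary n {e, f} π ↔ IsPathConf n e f π := by
  have even_one_add_iff (g : EF n) :
      Even (1 + #{h ∈ π | h.1 = g}) ↔ #{h ∈ π | h.1 = g} = 1 := by
    have : #{h ∈ π | h.1 = g} ≤ 2 := card_filter_fst_eq_le_card π g
    rw [Nat.even_iff]
    omega
  simp only [HasBoundary, IsPathConf, mem_insert, mem_singleton]
  constructor
  · rintro ⟨hv, hg⟩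
    refine ⟨hv, fun g hge hgf => by simpa [hge, hgf] using hg g, ?_, ?_⟩
    · exact (even_one_add_iff e).1 (by simpa using hg e)
    · exact (even_one_add_iff f).1 (by simpa using hg f)
  · rintro ⟨hv, hg, he, hf⟩
    refine ⟨hv, fun g => ?_⟩
    by_cases hge : g = e
    · subst hge
      simp [he]
    by_cases hgf : g = f
    · subst hgf
      simp [hf]
    simpa [hge, hgf] using hg g hge hgf

lemma Zn_pos {a b c : ℝ} (ha : 0 < a) (hb : 0 ≤ b) (hc : 0 ≤ c) : 0 < Zn n a b c := by
  have vWt_nonneg (sa sb sc : Bool) : 0 ≤ vWt a b c sa sb sc := by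
    unfold vWt
    split_ifs <;> positivity
  let σ₀ : ConfF n := fun g => g.1 = .a
  have hσ₀ : 0 < confWt n a b c σ₀ := by
    refine prod_pos fun v _ => ?_
    rcases v with ⟨⟨x, y⟩, u⟩
    cases u <;> simpa [σ₀, edgeAt, vWt] using ha
  have confWt_nonneg (σ : ConfF n) : 0 ≤ confWt n a b c σ :=
    prod_nonneg fun v _ => vWt_nonneg _ _ _
  exact hσ₀.trans_le (single_le_sum (fun σ _ => confWt_nonneg σ) (mem_univ σ₀))

lemma ofReal_ite_one_neg_one (s : Bool) :
    ((if s then (1 : ℝ) else -1 : ℝ) : ℂ) = cspin s := by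
  cases s <;> simp [cspin]

lemma ofReal_corrFin {a b c : ℝ} {e f : EF n} (hef : e ≠ f) :
    (corrFin n a b c e f : ℂ) =
      (∑ σ : ConfF n, (∏ g ∈ {e, f}, cspin (σ g)) * confWt n a b c σ) / Zn n a b c := by
  simp only [corrFin, Zn, Complex.ofReal_div, Complex.ofReal_sum, Complex.ofReal_mul,
    ofReal_ite_one_neg_one, prod_pair hef]

end PolygonRepresentation

theorem two_edge_correlation_polygon_representation_general
    (n : ℕ) [NeZero n] (a b c : ℝ) (ha : 0 < a) (hb : 0 < b) (hc : 0 < c)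
    (A B C : ℝ)
    (hA : A = (a - b - c) / (a + b + c))
    (hB : B = (b - a - c) / (a + b + c))
    (hC : C = (c - a - b) / (a + b + c))
    (ε : EType → ℂ)
    (hbc : ε .b * ε .c = (A : ℂ))
    (hac : ε .a * ε .c = (B : ℂ))
    (hab : ε .a * ε .b = (C : ℂ))
    (e f : EF n) (hef : e ≠ f) :
    polygonSum n ε ≠ 0 ∧
      ((corrFin n a b c e f : ℝ) : ℂ) = pathSum n ε e f / polygonSum n ε := by
  subst hA hB hC
  have habc : a + b + c ≠ 0 := by positivity
  have habc' : (a : ℂ) + b + c ≠ 0 := by exact_mod_cast habc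
  have expansion := sum_polyWt_hasBoundary n habc hbc hac hab
  set κ : ℂ := (8 / (a + b + c)) ^ Fintype.card (VF n) /
    2 ^ (Fintype.card (VF n) + Fintype.card (EF n))
  have hκ : κ ≠ 0 := by simp [κ, habc']
  have hpoly : polygonSum n ε = κ * Zn n a b c := by
    simp_rw [polygonSum, ← hasBoundary_empty_iff, expansion, Zn]
    simp
  have hpath : pathSum n ε e f =
      κ * ∑ σ : ConfF n, (∏ g ∈ {e, f}, cspin (σ g)) * confWt n a b c σ := by
    simp_rw [pathSum, ← hasBoundary_pair_iff, expansion]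
  have hZ : (Zn n a b c : ℂ) ≠ 0 := by exact_mod_cast (Zn_pos ha hb.le hc.le).ne'
  refine ⟨hpoly ▸ mul_ne_zero hκ hZ, ?_⟩
  rw [hpath, hpoly, mul_div_mul_left _ _ hκ, ofReal_corrFin hef]

/-- polygon representation of the two-edge correlation. -/
theorem two_edge_correlation_polygon_representation
    (n : ℕ) [NeZero n] (a b c : ℝ) (ha : 0 < a) (hb : 0 < b) (hc : 0 < c)
    (A B C : ℝ)
    (hA : A = (a - b - c) / (a + b + c))
    (hB : B = (b - a - c) / (a + b + c))
    (hC : C = (c - a - b) / (a + b + c))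
    (hABC : A * B * C ≠ 0)
    (ε : EType → ℂ)
    (hbc : ε .b * ε .c = (A : ℂ))
    (hac : ε .a * ε .c = (B : ℂ))
    (hab : ε .a * ε .b = (C : ℂ))
    (e f : EF n) (hef : e ≠ f) :
    polygonSum n ε ≠ 0 ∧
      ((corrFin n a b c e f : ℝ) : ℂ) = pathSum n ε e f / polygonSum n ε :=
  two_edge_correlation_polygon_representation_general n a b c ha hb hc A B C hA hB hC ε hbc hac hab
    e f hef
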